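/- Let (A, m) be a Noetherian local ring and I an ideal of A. Then the Krull dimension of the amalgamated duplication A ⋈ I equals the Krull dimension of A, and depth A ⋈ I = min(depth A, depth I). -/

import Mathlib

open IsLocalRing

variable {A : Type} [CommRing A]

/-- The amalgamated duplication `A ⋈ I = {(a, a + i) : a ∈ A, i ∈ I}` of a ring `A` along an
ideal `I`, as a subring of `A × A`. -/
def AmalgDup (I : Ideal A) : Subring (A × A) where
  carrier := {x | ∃ a : A, ∃ i ∈ I, x = (a, a + i)}
  zero_mem' := ⟨0, 0, I.zero_mem, by simp; rfl⟩
  one_mem' := ⟨1, 0, I.zero_mem, by simp; rfl⟩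
  add_mem' := by
    rintro x y ⟨a, i, hi, rfl⟩ ⟨b, k, hk, rfl⟩
    exact ⟨a + b, i + k, I.add_mem hi hk, by
      simp only [Prod.mk_add_mk, Prod.mk.injEq]
      exact ⟨trivial, by ring⟩⟩
  neg_mem' := by
    rintro x ⟨a, i, hi, rfl⟩
    exact ⟨-a, -i, I.neg_mem hi, by
      simp only [Prod.neg_mk, Prod.mk.injEq]
      exact ⟨trivial, by ring⟩⟩
  mul_mem' := by
    rintro x y ⟨a, i, hi, rfl⟩ ⟨b, k, hk, rfl⟩
    exact ⟨a * b, a * k + i * b + i * k,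
      I.add_mem (I.add_mem (I.mul_mem_left _ hk) (I.mul_mem_right _ hi)) (I.mul_mem_right _ hi),
      by
      simp only [Prod.mk_mul_mk, Prod.mk.injEq]
      exact ⟨trivial, by ring⟩⟩

/-- The canonical ring homomorphism `A → A ⋈ I`, `a ↦ (a, a)`. -/
def AmalgDup.incl (I : Ideal A) : A →+* AmalgDup I where
  toFun a := ⟨(a, a), a, 0, I.zero_mem, by simp⟩
  map_one' := Subtype.ext (by simp)
  map_mul' x y := Subtype.ext (by simp [Prod.mk_mul_mk])
  map_zero' := Subtype.ext (by simp)
  map_add' x y := Subtype.ext (by simp [Prod.mk_add_mk])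

/-- `A ⋈ I` as an `A`-module. -/
instance AmalgDup.moduleA (I : Ideal A) : Module A (AmalgDup I) :=
  Module.compHom _ (AmalgDup.incl I)

noncomputable def lcDepth (R M : Type) [CommRing R] [IsLocalRing R]
    [AddCommGroup M] [Module R M] : ℕ∞ :=
  sInf {n : ℕ∞ | ∃ i : ℕ, n = (i : ℕ∞) ∧
    Nontrivial ((localCohomology (maximalIdeal R) i).obj (ModuleCat.of R M))}

/-!
`A ⋈ I` is integral over the diagonal copy of `A` (the element `(a, a + i)` is a root of
`(X - a)(X - (a + i))`) and maps onto `A` by the first projection, so both rings have the same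
dimension. As an `A`-module, `(a, a + i) ↦ (a, i)` identifies `A ⋈ I` with `A × I`; local
cohomology is a colimit of `Ext` functors, hence additive, so `H^i_m(A ⋈ I)` vanishes exactly
when both `H^i_m(A)` and `H^i_m(I)` do.
-/

open CategoryTheory Limits Polynomial

lemma nontrivial_prod_iff {α β : Type*} [Nonempty α] [Nonempty β] :
    Nontrivial (α × β) ↔ Nontrivial α ∨ Nontrivial β := by
  refine ⟨fun h => ?_, fun h => h.elim (fun _ => inferInstance) (fun _ => inferInstance)⟩
  contrapose! h
  obtain ⟨_, _⟩ := h
  infer_instance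

namespace CategoryTheory

variable {V W : Type*} [Category V] [Category W]

lemma NatTrans.mapHomologicalComplex_add [Preadditive V] [Preadditive W] {F G : V ⥤ W}
    [F.Additive] [G.Additive] (α β : F ⟶ G) {ι : Type*} (c : ComplexShape ι) :
    NatTrans.mapHomologicalComplex (α + β) c =
      NatTrans.mapHomologicalComplex α c + NatTrans.mapHomologicalComplex β c := by
  ext K i
  rfl

lemma NatTrans.leftDerived_add [Abelian V] [Abelian W] [HasProjectiveResolutions V]
    {F G : V ⥤ W} [F.Additive] [G.Additive] (α β : F ⟶ G) (n : ℕ) :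
    NatTrans.leftDerived (α + β) n = NatTrans.leftDerived α n + NatTrans.leftDerived β n := by
  ext X
  simp only [NatTrans.app_add, ProjectiveResolution.leftDerived_app_eq _ (projectiveResolution X),
    NatTrans.mapHomologicalComplex_add, Functor.map_add, Preadditive.add_comp,
    Preadditive.comp_add]

lemma NatTrans.rightOp_add [Preadditive W] {F G : Vᵒᵖ ⥤ W} (α β : F ⟶ G) :
    NatTrans.rightOp (α + β) = NatTrans.rightOp α + NatTrans.rightOp β := rfl

lemma linearYoneda_map_add (R : Type*) [Ring R] (C : Type*) [Category C] [Preadditive C]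
    [Linear R C] {Y Z : C} (f g : Y ⟶ Z) :
    (linearYoneda R C).map (f + g) = (linearYoneda R C).map f + (linearYoneda R C).map g := by
  ext X h
  exact Preadditive.comp_add _ _ _ h f g

instance Ext_obj_additive (R : Type*) [Ring R] (C : Type*) [Category C] [Abelian C] [Linear R C]
    [EnoughProjectives C] (n : ℕ) (X : Cᵒᵖ) : ((Ext R C n).obj X).Additive where
  map_add {Y Z f g} := by
    change ((NatTrans.leftDerived (NatTrans.rightOp ((linearYoneda R C).map (f + g))) n).app
      X.unop).unop = _
    rw [linearYoneda_map_add, NatTrans.rightOp_add, NatTrans.leftDerived_add]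
    rfl

instance Functor.colimit_additive {J : Type*} [Category J] [Preadditive V] [Preadditive W]
    [HasColimitsOfShape J W] (H : J ⥤ V ⥤ W) [∀ j, (H.obj j).Additive] :
    (colimit H).Additive where
  map_add {X Y f g} := by
    apply (isColimitOfPreserves ((evaluation V W).obj X) (colimit.isColimit H)).hom_ext
    intro j
    simp [← NatTrans.naturality, Preadditive.comp_add]

universe u v

lemma Functor.nontrivial_obj_prod_iff {R S : Type u} [Ring R] [Ring S]
    (F : ModuleCat.{v} R ⥤ ModuleCat.{v} S) [F.Additive]
    (M N : Type v) [AddCommGroup M] [Module R M] [AddCommGroup N] [Module R N] :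
    Nontrivial (F.obj (ModuleCat.of R (M × N))) ↔
      Nontrivial (F.obj (ModuleCat.of R M)) ∨ Nontrivial (F.obj (ModuleCat.of R N)) := by
  have := preservesBinaryBiproducts_of_preservesBiproducts F
  let e : F.obj (ModuleCat.of R (M × N)) ≅ ModuleCat.of S (F.obj (.of R M) × F.obj (.of R N)) :=
    F.mapIso (ModuleCat.biprodIsoProd (.of R M) (.of R N)).symm ≪≫ F.mapBiprod _ _ ≪≫
      ModuleCat.biprodIsoProd _ _
  rw [e.toLinearEquiv.toEquiv.nontrivial_congr]
  exact nontrivial_prod_iff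

end CategoryTheory

instance localCohomology_additive {R : Type*} [CommRing R] (J : Ideal R) (i : ℕ) :
    (localCohomology J i).Additive :=
  have (t : ℕᵒᵖᵒᵖ) :
      ((localCohomology.diagram (localCohomology.idealPowersDiagram J) i).obj t).Additive := by
    dsimp only [localCohomology.diagram, Functor.comp_obj, Functor.op_obj]
    infer_instance
  inferInstanceAs (colimit (localCohomology.diagram _ i)).Additive

lemma lcDepth_congr (R : Type) {M N : Type} [CommRing R] [IsLocalRing R]
    [AddCommGroup M] [Module R M] [AddCommGroup N] [Module R N] (e : M ≃ₗ[R] N) :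
    lcDepth R M = lcDepth R N := by
  simp only [lcDepth, fun i : ℕ => ((localCohomology (maximalIdeal R) i).mapIso
    e.toModuleIso).toLinearEquiv.toEquiv.nontrivial_congr]

lemma lcDepth_prod (R M N : Type) [CommRing R] [IsLocalRing R]
    [AddCommGroup M] [Module R M] [AddCommGroup N] [Module R N] :
    lcDepth R (M × N) = min (lcDepth R M) (lcDepth R N) := by
  simp only [lcDepth, ← sInf_union, ← Set.ofPred_or, Functor.nontrivial_obj_prod_iff,
    and_or_left, exists_or]

lemma ringKrullDim_le_of_isIntegral {R S : Type*} [CommRing R] [CommRing S] (f : R →+* S)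
    (hf : f.IsIntegral) : ringKrullDim S ≤ ringKrullDim R := by
  let := f.toAlgebra
  refine Order.krullDim_le_of_strictMono (PrimeSpectrum.comap f) fun P Q hPQ => ?_
  obtain ⟨x, hxQ, hxP⟩ := SetLike.exists_of_lt ((PrimeSpectrum.asIdeal_lt_asIdeal P Q).mpr hPQ)
  exact Ideal.comap_lt_comap_of_integral_mem_sdiff hPQ.le ⟨hxQ, hxP⟩ (hf x)

namespace AmalgDup

variable (I : Ideal A)

lemma coe_smul (a : A) (x : AmalgDup I) : ((a • x : AmalgDup I) : A × A) = (a, a) * x := rfl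

lemma snd_sub_fst_mem (x : AmalgDup I) : (x : A × A).2 - (x : A × A).1 ∈ I := by
  obtain ⟨a, i, hi, hx⟩ := x.2
  simp [hx, hi]

lemma isIntegral_incl : (incl I).IsIntegral := by
  intro x
  obtain ⟨a, i, -, hx⟩ := x.2
  refine ⟨(X - C a) * (X - C (a + i)), (monic_X_sub_C a).mul (monic_X_sub_C (a + i)), ?_⟩
  apply Subtype.ext
  simp [hx, incl]

lemma fst_surjective : Function.Surjective ((RingHom.fst A A).comp (AmalgDup I).subtype) :=
  fun a => ⟨incl I a, rfl⟩

theorem ringKrullDim_eq : ringKrullDim (AmalgDup I) = ringKrullDim A :=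
  (ringKrullDim_le_of_isIntegral _ (isIntegral_incl I)).antisymm
    (ringKrullDim_le_of_surjective _ (fst_surjective I))

def linearEquivProd : AmalgDup I ≃ₗ[A] A × I where
  toFun x := (x.1.1, ⟨x.1.2 - x.1.1, snd_sub_fst_mem I x⟩)
  invFun p := ⟨(p.1, p.1 + p.2.1), p.1, p.2.1, p.2.2, rfl⟩
  left_inv x := by ext <;> simp
  right_inv p := by ext <;> simp
  map_add' x y := Prod.ext rfl (Subtype.ext (add_sub_add_comm _ _ _ _))
  map_smul' a x := Prod.ext rfl (Subtype.ext (by simp [coe_smul, mul_sub]))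

end AmalgDup

theorem amalgDup_ringKrullDim_and_lcDepth_general (I : Ideal A)
    [IsLocalRing A] :
    ringKrullDim (AmalgDup I) = ringKrullDim A ∧
    lcDepth A (AmalgDup I) = min (lcDepth A A) (lcDepth A I) :=
  ⟨AmalgDup.ringKrullDim_eq I,
    (lcDepth_congr A (AmalgDup.linearEquivProd I)).trans (lcDepth_prod A A I)⟩

theorem amalgDup_ringKrullDim_and_lcDepth (I : Ideal A)
    [IsNoetherianRing A] [IsLocalRing A] :
    ringKrullDim (AmalgDup I) = ringKrullDim A ∧
    lcDepth A (AmalgDup I) = min (lcDepth A A) (lcDepth A I) :=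
  amalgDup_ringKrullDim_and_lcDepth_general I
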